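/- arXiv:1703.03125 — 3 statements merged into one kernel-verified Lean document; each statement's English description precedes it below -/
import Mathlib

section
/- For all complex numbers z and w and any real p > 1, one has | |z|^{p-1} z - |w|^{p-1} w | ≤ p (|z| + |w|)^{p-1} |z - w|. -/
/-!
Write `q = p - 1` and assume `‖w‖ ≤ ‖z‖`. Splitting
`‖z‖^q z - ‖w‖^q w = ‖z‖^q (z - w) + (‖z‖^q - ‖w‖^q) w`, the first term is at most
`‖z‖^q ‖z - w‖`, and the second is controlled by the scalar inequality
`(a^q - b^q) b ≤ q a^q (a - b)` for `0 ≤ b ≤ a`, together with `‖z‖ - ‖w‖ ≤ ‖z - w‖`.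
-/

open Real

namespace Real

theorem rpow_sub_rpow_mul_le {a b q : ℝ} (hb : 0 ≤ b) (hba : b ≤ a) (hq : 0 ≤ q) :
    (a ^ q - b ^ q) * b ≤ q * a ^ q * (a - b) := by
  rcases hb.eq_or_lt with rfl | hb
  · simpa using mul_nonneg (mul_nonneg hq (rpow_nonneg hba q)) hba
  have ha := hb.trans_le hba
  -- `(b / a)^q = exp (q log (b / a)) ≥ 1 + q log (b / a) ≥ 1 + q (1 - a / b)`
  have hlog : 1 - a / b ≤ log (b / a) := by
    simpa using one_sub_inv_le_log_of_pos (div_pos hb ha)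
  have hlower : a ^ q * (1 + q * (1 - a / b)) ≤ b ^ q := calc
    a ^ q * (1 + q * (1 - a / b)) ≤ a ^ q * (1 + q * log (b / a)) := by gcongr
    _ ≤ a ^ q * exp (log (b / a) * q) := by
        gcongr; linarith [add_one_le_exp (log (b / a) * q)]
    _ = b ^ q := by
        rw [← rpow_def_of_pos (div_pos hb ha), div_rpow hb.le ha.le,
          mul_div_cancel₀ _ (rpow_pos_of_pos ha q).ne']
  have hexpand : a ^ q * (1 + q * (1 - a / b)) * b = a ^ q * b - q * a ^ q * (a - b) := by
    field_simp; ring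
  nlinarith

end Real

section PowerNonlinearity

variable {E : Type*} [NormedAddCommGroup E] [NormedSpace ℝ E]

theorem norm_rpow_smul_sub_rpow_smul_le_of_norm_le {x y : E} {q : ℝ} (hq : 0 ≤ q)
    (hyx : ‖y‖ ≤ ‖x‖) :
    ‖‖x‖ ^ q • x - ‖y‖ ^ q • y‖ ≤ (q + 1) * ‖x‖ ^ q * ‖x - y‖ := by
  have hsplit : ‖x‖ ^ q • x - ‖y‖ ^ q • y = ‖x‖ ^ q • (x - y) + (‖x‖ ^ q - ‖y‖ ^ q) • y := by
    rw [smul_sub, sub_smul]; abel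
  have hmono : ‖y‖ ^ q ≤ ‖x‖ ^ q := rpow_le_rpow (norm_nonneg y) hyx hq
  calc ‖‖x‖ ^ q • x - ‖y‖ ^ q • y‖
      ≤ ‖x‖ ^ q * ‖x - y‖ + (‖x‖ ^ q - ‖y‖ ^ q) * ‖y‖ := by
        rw [hsplit]
        refine (norm_add_le _ _).trans_eq ?_
        rw [norm_smul, norm_smul, Real.norm_of_nonneg (rpow_nonneg (norm_nonneg x) q),
          Real.norm_of_nonneg (sub_nonneg.2 hmono)]
    _ ≤ ‖x‖ ^ q * ‖x - y‖ + q * ‖x‖ ^ q * (‖x‖ - ‖y‖) :=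
        add_le_add le_rfl (rpow_sub_rpow_mul_le (norm_nonneg y) hyx hq)
    _ ≤ ‖x‖ ^ q * ‖x - y‖ + q * ‖x‖ ^ q * ‖x - y‖ := by
        gcongr; exact norm_sub_norm_le x y
    _ = (q + 1) * ‖x‖ ^ q * ‖x - y‖ := by ring

theorem norm_rpow_smul_sub_rpow_smul_le (x y : E) {q : ℝ} (hq : 0 ≤ q) :
    ‖‖x‖ ^ q • x - ‖y‖ ^ q • y‖ ≤ (q + 1) * max ‖x‖ ‖y‖ ^ q * ‖x - y‖ := by
  rcases le_total ‖y‖ ‖x‖ with hyx | hxy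
  · simpa [max_eq_left hyx] using norm_rpow_smul_sub_rpow_smul_le_of_norm_le hq hyx
  · simpa [max_eq_right hxy, norm_sub_rev] using
      norm_rpow_smul_sub_rpow_smul_le_of_norm_le (x := y) (y := x) hq hxy

end PowerNonlinearity

/-- Lipschitz-type estimate for the power nonlinearity `G_p(z) = |z|^{p-1} z`. -/
theorem abs_pow_mul_self_sub_le (z w : ℂ) (p : ℝ) (hp : 1 < p) :
    ‖(↑(‖z‖ ^ (p - 1)) : ℂ) * z
        - (↑(‖w‖ ^ (p - 1)) : ℂ) * w‖
      ≤ p * (‖z‖ + ‖w‖) ^ (p - 1) * ‖z - w‖ := by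
  have hq : 0 ≤ p - 1 := by linarith
  have hmax : max ‖z‖ ‖w‖ ≤ ‖z‖ + ‖w‖ := max_le_add_of_nonneg (norm_nonneg z) (norm_nonneg w)
  calc ‖(↑(‖z‖ ^ (p - 1)) : ℂ) * z - (↑(‖w‖ ^ (p - 1)) : ℂ) * w‖
      = ‖‖z‖ ^ (p - 1) • z - ‖w‖ ^ (p - 1) • w‖ := by simp only [Complex.real_smul]
    _ ≤ (p - 1 + 1) * max ‖z‖ ‖w‖ ^ (p - 1) * ‖z - w‖ := norm_rpow_smul_sub_rpow_smul_le z w hq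
    _ ≤ p * (‖z‖ + ‖w‖) ^ (p - 1) * ‖z - w‖ := by
        rw [sub_add_cancel]; gcongr
end

section
/- Let 0 < a < 1, b > 0, λ ∈ ℂ with Im λ > 0, and c > 0. Set q = b/(2(1−a)) and define τ₁ > 0 by 1/τ₁ = (2q · Im λ · c^b)^{1/(1−a)}. Fix σ ∈ (0, τ₁), t_* > 0, and ε > 0 with t_* ≤ σ ε^{−2q}. Then for all t ∈ [t_*, σ ε^{−2q}] and any 0 ≤ r ≤ c, the quantity |η₀(t)| = ε r / (1 + 2q Im λ r^b ε^b t_*^{1−a} − 2q Im λ r^b ε^b t^{1−a})^{1/b} is well-defined (the denominator base is strictly positive) and satisfies |η₀(t)| ≤ C₀ ε where C₀ = c / (1 − (σ/τ₁)^{1−a})^{1/b}. -/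
/-- Uniform bound `|η₀(t)| ≤ C₀ ε` for the explicit solution of the model ODE
on `[t_*, σ ε^{-2q}]` with `σ` below the critical value `τ₁`. -/
theorem eta0_uniform_bound
    (a b : ℝ) (ha0 : 0 < a) (ha1 : a < 1) (hb : 0 < b)
    (lam : ℂ) (hlam : 0 < lam.im) (c : ℝ) (hc : 0 < c)
    (q τ₁ : ℝ) (hq : q = b / (2 * (1 - a)))
    (hτ₁ : 1 / τ₁ = (2 * q * lam.im * c ^ b) ^ (1 / (1 - a))) (hτ₁pos : 0 < τ₁)
    (σ tstar ε : ℝ) (hσ0 : 0 < σ) (hστ : σ < τ₁) (htstar : 0 < tstar) (hε : 0 < ε)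
    (hint : tstar ≤ σ * ε ^ (-(2 * q)))
    (C₀ : ℝ) (hC₀ : C₀ = c / (1 - (σ / τ₁) ^ (1 - a)) ^ (1 / b)) :
    ∀ t ∈ Set.Icc tstar (σ * ε ^ (-(2 * q))), ∀ r ∈ Set.Icc (0 : ℝ) c,
      0 < 1 + 2 * q * lam.im * r ^ b * ε ^ b * tstar ^ (1 - a)
            - 2 * q * lam.im * r ^ b * ε ^ b * t ^ (1 - a) ∧
      ε * r / (1 + 2 * q * lam.im * r ^ b * ε ^ b * tstar ^ (1 - a)
            - 2 * q * lam.im * r ^ b * ε ^ b * t ^ (1 - a)) ^ (1 / b)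
        ≤ C₀ * ε := by
  intro t ht r hr
  obtain ⟨ht1, ht2⟩ := ht
  obtain ⟨hr0, hrc⟩ := hr
  have h1a : (0:ℝ) < 1 - a := by linarith
  have hqpos : 0 < q := by rw [hq]; positivity
  have hKpos : 0 < 2 * q * lam.im := by positivity
  have htpos : 0 < t := lt_of_lt_of_le htstar ht1
  have hKcb : (0:ℝ) < 2 * q * lam.im * c ^ b := by positivity
  have key : (1 / τ₁) ^ (1 - a) = 2 * q * lam.im * c ^ b := by
    rw [hτ₁, ← Real.rpow_mul hKcb.le, one_div (1 - a),
      inv_mul_cancel₀ h1a.ne', Real.rpow_one]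
  have h2q : 2 * q * (1 - a) = b := by
    rw [hq]; field_simp
  -- exponent identity
  have hexp : ε ^ b * (ε ^ (-(2 * q))) ^ (1 - a) = 1 := by
    rw [← Real.rpow_mul hε.le, ← Real.rpow_add hε]
    have : b + -(2 * q) * (1 - a) = 0 := by nlinarith [h2q]
    rw [this, Real.rpow_zero]
  -- the key product bound
  have hA0 : (0:ℝ) ≤ (σ / τ₁) ^ (1 - a) := Real.rpow_nonneg (by positivity) _
  have hA1 : (σ / τ₁) ^ (1 - a) < 1 :=
    Real.rpow_lt_one (by positivity) ((div_lt_one hτ₁pos).mpr hστ) h1a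
  have hmain : 2 * q * lam.im * r ^ b * ε ^ b * t ^ (1 - a) ≤ (σ / τ₁) ^ (1 - a) := by
    have hrb : r ^ b ≤ c ^ b := Real.rpow_le_rpow hr0 hrc hb.le
    have htb : t ^ (1 - a) ≤ (σ * ε ^ (-(2 * q))) ^ (1 - a) :=
      Real.rpow_le_rpow htpos.le ht2 h1a.le
    have hmul : (σ * ε ^ (-(2 * q))) ^ (1 - a)
        = σ ^ (1 - a) * (ε ^ (-(2 * q))) ^ (1 - a) :=
      Real.mul_rpow hσ0.le (Real.rpow_nonneg hε.le _)
    have hdiv : (σ / τ₁) ^ (1 - a) = σ ^ (1 - a) * (1 / τ₁) ^ (1 - a) := by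
      rw [← Real.mul_rpow hσ0.le (by positivity)]
      congr 1; field_simp
    have hp : r ^ b * t ^ (1 - a) ≤ c ^ b * (σ * ε ^ (-(2 * q))) ^ (1 - a) :=
      mul_le_mul hrb htb (Real.rpow_nonneg htpos.le _) (Real.rpow_nonneg hc.le _)
    calc 2 * q * lam.im * r ^ b * ε ^ b * t ^ (1 - a)
        = (2 * q * lam.im * ε ^ b) * (r ^ b * t ^ (1 - a)) := by ring
      _ ≤ (2 * q * lam.im * ε ^ b) * (c ^ b * (σ * ε ^ (-(2 * q))) ^ (1 - a)) := by
          apply mul_le_mul_of_nonneg_left hp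
          positivity
      _ = ((1 / τ₁) ^ (1 - a) * σ ^ (1 - a)) * (ε ^ b * (ε ^ (-(2 * q))) ^ (1 - a)) := by
          rw [hmul, key]; ring
      _ = (1 / τ₁) ^ (1 - a) * σ ^ (1 - a) := by rw [hexp, mul_one]
      _ = (σ / τ₁) ^ (1 - a) := by rw [hdiv]; ring
  have hmid : 0 ≤ 2 * q * lam.im * r ^ b * ε ^ b * tstar ^ (1 - a) := by
    have := Real.rpow_nonneg hr0 b
    have := (Real.rpow_pos_of_pos hε b).le
    have := (Real.rpow_pos_of_pos htstar (1 - a)).le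
    positivity
  set D := 1 + 2 * q * lam.im * r ^ b * ε ^ b * tstar ^ (1 - a)
      - 2 * q * lam.im * r ^ b * ε ^ b * t ^ (1 - a) with hD
  have hDδ : 1 - (σ / τ₁) ^ (1 - a) ≤ D := by
    rw [hD]; linarith
  have hδpos : 0 < 1 - (σ / τ₁) ^ (1 - a) := by linarith
  have hDpos : 0 < D := lt_of_lt_of_le hδpos hDδ
  refine ⟨hDpos, ?_⟩
  have hδb : (0:ℝ) < (1 - (σ / τ₁) ^ (1 - a)) ^ (1 / b) :=
    Real.rpow_pos_of_pos hδpos _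
  have hDb : (1 - (σ / τ₁) ^ (1 - a)) ^ (1 / b) ≤ D ^ (1 / b) :=
    Real.rpow_le_rpow hδpos.le hDδ (by positivity)
  have hnum : ε * r ≤ ε * c := by nlinarith
  have hfinal : ε * r / D ^ (1 / b)
      ≤ ε * c / (1 - (σ / τ₁) ^ (1 - a)) ^ (1 / b) :=
    div_le_div₀ (by positivity) hnum hδb hDb
  calc ε * r / D ^ (1 / b) ≤ ε * c / (1 - (σ / τ₁) ^ (1 - a)) ^ (1 / b) := hfinal
    _ = C₀ * ε := by rw [hC₀]; field_simp
end

section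
/- (ODE perturbation lemma) Let 0 < a < 1, b > 0, λ ∈ ℂ with Im λ > 0, and let ψ₀ : ℝ^d → ℂ be continuous with Ψ₀ = sup|ψ₀| < ∞. Set q = b/(2(1−a)) and 1/τ₁ = (2q Im λ Ψ₀^b)^{1/(1−a)}. Fix t_* > 0, T̄ > t_*, continuous ψ₁ : ℝ^d → ℂ and ρ : [t_*, T̄) × ℝ^d → ℂ with |ψ₁(ξ)| ≤ C₁ ε^{1+δ} and |ρ(t,ξ)| ≤ C₂ ε^{1+b+δ}/t^a for constants C₁, C₂, δ > 0. Let η solve i ∂_t η = (λ/t^a)|η|^b η + ρ on (t_*, T̄) with η(t_*,ξ) = ε ψ₀(ξ) + ψ₁(ξ). Let σ ∈ (0, τ₁), T_* = min{T̄, σ ε^{−2q}}, and suppose 0 < ε ≤ min{1, σ^{−1/q}, M^{−1/δ}} where M = 2(C₁² + C₂²/(2C₃))^{1/2} exp(C₃ σ^{1−a}/(2(1−a))) and C₃ = 2|λ|(b+1)(2C₀+1)^b + 1/2, with C₀ = Ψ₀/(1 − (σ/τ₁)^{1−a})^{1/b}. Then |η(t,ξ)| ≤ C₀ ε + M ε^{1+δ}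 ≤ (C₀+1) ε for all (t,ξ) ∈ [t_*, T_*) × ℝ^d. -/
open Real Set

lemma l0 {b R r s : ℝ} (hb : 0 < b) (h0 : 0 ≤ r) (hrs : r ≤ s) (hsR : s ≤ R) :
    (s ^ b - r ^ b) * r ≤ b * R ^ b * (s - r) := by
  have hR0 : 0 ≤ R := le_trans (le_trans h0 hrs) hsR
  rcases eq_or_lt_of_le h0 with h0' | h0'
  · rw [← h0']
    simp only [mul_zero, sub_zero]
    exact mul_nonneg (mul_nonneg hb.le (Real.rpow_nonneg hR0 b)) (by linarith)
  rcases eq_or_lt_of_le hrs with h | h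
  · rw [h]; simp
  obtain ⟨c, hc, hc'⟩ := exists_hasDerivAt_eq_slope (fun x => x ^ b) (fun x => b * x ^ (b - 1)) h
    (by
      apply ContinuousOn.rpow_const continuousOn_id
      intro x hx; left; exact ne_of_gt (lt_of_lt_of_le h0' hx.1))
    (fun x hx => Real.hasDerivAt_rpow_const (Or.inl (ne_of_gt (lt_trans h0' hx.1))))
  have hkey : b * c ^ (b - 1) * r ≤ b * R ^ b := by
    rcases le_total b 1 with hb1 | hb1
    · have h1 : c ^ (b - 1) ≤ r ^ (b - 1) :=
        Real.rpow_le_rpow_of_nonpos h0' (le_of_lt hc.1) (by linarith)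
      have h2 : r ^ (b - 1) * r = r ^ b := by
        rw [← Real.rpow_add_one h0'.ne', sub_add_cancel]
      have h3 : r ^ b ≤ R ^ b := Real.rpow_le_rpow h0 (le_trans hrs hsR) hb.le
      calc b * c ^ (b - 1) * r ≤ b * r ^ (b - 1) * r := by gcongr
        _ = b * r ^ b := by rw [mul_assoc, h2]
        _ ≤ b * R ^ b := by gcongr
    · have hc0 : 0 < c := lt_trans h0' hc.1
      have h1 : c ^ (b - 1) ≤ R ^ (b - 1) :=
        Real.rpow_le_rpow hc0.le (le_trans (le_of_lt hc.2) hsR) (by linarith)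
      have h2 : R ^ (b - 1) * R = R ^ b := by
        have hR0' : 0 < R := lt_of_lt_of_le (lt_trans h0' hc.1) (le_trans hc.2.le hsR)
        rw [← Real.rpow_add_one hR0'.ne', sub_add_cancel]
      have h4 : c ^ (b - 1) * r ≤ R ^ (b - 1) * R :=
        mul_le_mul h1 (le_trans hrs hsR) h0 (Real.rpow_nonneg hR0 _)
      calc b * c ^ (b - 1) * r ≤ b * R ^ (b - 1) * R := by
            rw [mul_assoc, mul_assoc]; exact mul_le_mul_of_nonneg_left h4 hb.le
        _ = b * R ^ b := by rw [mul_assoc, h2]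
  rw [eq_div_iff (by linarith : s - r ≠ 0)] at hc'
  rw [← hc']
  nlinarith [mul_le_mul_of_nonneg_right hkey (by linarith : (0:ℝ) ≤ s - r)]

lemma l1aux {b R : ℝ} (hb : 0 < b) (hR : 0 ≤ R) {x y : ℂ}
    (hx : ‖x‖ ≤ R) (hy : ‖y‖ ≤ R) (hyx : ‖y‖ ≤ ‖x‖) :
    ‖(↑(‖x‖ ^ b) : ℂ) * x - (↑(‖y‖ ^ b) : ℂ) * y‖ ≤
      (b + 1) * R ^ b * ‖x - y‖ := by
  have key : (↑(‖x‖ ^ b) : ℂ) * x - (↑(‖y‖ ^ b) : ℂ) * y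
      = (↑(‖x‖ ^ b) : ℂ) * (x - y) + (↑(‖x‖ ^ b) - ↑(‖y‖ ^ b)) * y := by
    ring
  rw [key]
  have h1 : ‖(↑(‖x‖ ^ b) : ℂ) * (x - y)‖ ≤ R ^ b * ‖x - y‖ := by
    rw [norm_mul, Complex.norm_real, Real.norm_eq_abs, abs_of_nonneg (Real.rpow_nonneg (norm_nonneg x) b)]
    exact mul_le_mul_of_nonneg_right (Real.rpow_le_rpow (norm_nonneg x) hx hb.le)
      (norm_nonneg _)
  have h2 : ‖((↑(‖x‖ ^ b) : ℂ) - ↑(‖y‖ ^ b)) * y‖ ≤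
      b * R ^ b * ‖x - y‖ := by
    rw [norm_mul, ← Complex.ofReal_sub, Complex.norm_real, Real.norm_eq_abs,
      abs_of_nonneg (sub_nonneg.2 (Real.rpow_le_rpow (norm_nonneg y) hyx hb.le))]
    calc (‖x‖ ^ b - ‖y‖ ^ b) * ‖y‖
        ≤ b * R ^ b * (‖x‖ - ‖y‖) := l0 hb (norm_nonneg y) hyx hx
      _ ≤ b * R ^ b * ‖x - y‖ := by
          apply mul_le_mul_of_nonneg_left _ (by positivity)
          calc ‖x‖ - ‖y‖ ≤ ‖x - y‖ := by
                exact norm_sub_norm_le x y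
            _ = ‖x - y‖ := rfl
  calc ‖_‖ ≤ _ := norm_add_le _ _
    _ ≤ R ^ b * ‖x - y‖ + b * R ^ b * ‖x - y‖ := add_le_add h1 h2
    _ = (b + 1) * R ^ b * ‖x - y‖ := by ring

lemma l1 {b R : ℝ} (hb : 0 < b) (hR : 0 ≤ R) {x y : ℂ}
    (hx : ‖x‖ ≤ R) (hy : ‖y‖ ≤ R) :
    ‖(↑(‖x‖ ^ b) : ℂ) * x - (↑(‖y‖ ^ b) : ℂ) * y‖ ≤
      (b + 1) * R ^ b * ‖x - y‖ := by
  rcases le_total (‖y‖) (‖x‖) with h | h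
  · exact l1aux hb hR hx hy h
  · rw [← norm_neg]
    simp only [neg_sub]
    calc ‖(↑(‖y‖ ^ b) : ℂ) * y - (↑(‖x‖ ^ b) : ℂ) * x‖
        ≤ (b + 1) * R ^ b * ‖y - x‖ := l1aux hb hR hy hx h
      _ = (b + 1) * R ^ b * ‖x - y‖ := by rw [← norm_neg (y - x), neg_sub]

lemma gron {F J F' J' : ℝ → ℝ} {ta c D : ℝ} (hac : ta ≤ c) (hD : 0 ≤ D)
    (hFc : ContinuousOn F (Set.Icc ta c)) (hJc : ContinuousOn J (Set.Icc ta c))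
    (hF : ∀ t ∈ Set.Ioo ta c, HasDerivAt F (F' t) t)
    (hJ : ∀ t ∈ Set.Ioo ta c, HasDerivAt J (J' t) t)
    (hle : ∀ t ∈ Set.Ioo ta c, F' t ≤ J' t * (F t + D)) (hJa : J ta = 0) :
    F c ≤ (F ta + D) * Real.exp (J c) - D := by
  rcases eq_or_lt_of_le hac with h | h
  · rw [← h, hJa]; simp
  set G : ℝ → ℝ := fun t => (F t + D) * Real.exp (-(J t)) with hG
  have hGd : ∀ t ∈ Set.Ioo ta c,
      HasDerivAt G ((F' t - J' t * (F t + D)) * Real.exp (-(J t))) t := by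
    intro t ht
    have h1 : HasDerivAt (fun s => Real.exp (-(J s))) (Real.exp (-(J t)) * (-(J' t))) t :=
      ((hJ t ht).neg).exp
    have h2 : HasDerivAt (fun s => F s + D) (F' t) t := (hF t ht).add_const D
    have := h2.mul h1
    exact this.congr_deriv (by ring)
  have hGc : ContinuousOn G (Set.Icc ta c) :=
    ((hFc.add continuousOn_const).mul ((hJc.neg).rexp))
  have hanti : AntitoneOn G (Set.Icc ta c) := by
    apply antitoneOn_of_deriv_nonpos (convex_Icc ta c) hGc
    · intro t ht
      rw [interior_Icc] at ht
      exact ((hGd t ht).differentiableAt).differentiableWithinAt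
    · intro t ht
      rw [interior_Icc] at ht
      rw [(hGd t ht).deriv]
      have := hle t ht
      have hexp : (0:ℝ) < Real.exp (-(J t)) := Real.exp_pos _
      nlinarith
  have := hanti (Set.left_mem_Icc.2 hac) (Set.right_mem_Icc.2 hac) hac
  rw [hG] at this
  simp only [hJa, neg_zero, Real.exp_zero, mul_one] at this
  have hexp : (0:ℝ) < Real.exp (-(J c)) := Real.exp_pos _
  have hexp2 : Real.exp (-(J c)) * Real.exp (J c) = 1 := by
    rw [← Real.exp_add]; simp
  have h3 := mul_le_mul_of_nonneg_right this (Real.exp_pos (J c)).le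
  rw [mul_assoc, hexp2, mul_one] at h3
  linarith

lemma normSq_deriv {f : ℝ → ℂ} {f' : ℂ} {x : ℝ} (hf : HasDerivAt f f' x) :
    HasDerivAt (fun t => Complex.normSq (f t))
      (2 * ((f x).re * f'.re + (f x).im * f'.im)) x := by
  have hre : HasDerivAt (fun t => (f t).re) f'.re x := (Complex.reCLM.hasFDerivAt.comp_hasDerivAt x hf)
  have him : HasDerivAt (fun t => (f t).im) f'.im x := (Complex.imCLM.hasFDerivAt.comp_hasDerivAt x hf)
  have heq : (fun t => Complex.normSq (f t))
      = fun t => (f t).re * (f t).re + (f t).im * (f t).im := by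
    ext t; simp [Complex.normSq_apply]
  rw [heq]
  have : HasDerivAt (fun t => (f t).re * (f t).re + (f t).im * (f t).im)
      ((f'.re * (f x).re + (f x).re * f'.re) + (f'.im * (f x).im + (f x).im * f'.im)) x :=
    (hre.mul hre).add (him.mul him)
  convert this using 1
  ring

lemma coeff_id (lam : ℂ) (bim P ta oneK : ℝ) (hbim : bim ≠ 0) (hta : ta ≠ 0)
    (hK : oneK ≠ 0) :
    (-lam / ((bim : ℝ) : ℂ)) * ((-(bim * P * ta⁻¹) / oneK : ℝ) : ℂ)
      = lam / ((ta : ℝ) : ℂ) * ((P * oneK⁻¹ : ℝ) : ℂ) := by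
  have hbimC : ((bim : ℝ) : ℂ) ≠ 0 := by exact_mod_cast hbim
  have htaC : ((ta : ℝ) : ℂ) ≠ 0 := by exact_mod_cast hta
  have hKC : ((oneK : ℝ) : ℂ) ≠ 0 := by exact_mod_cast hK
  push_cast
  field_simp

set_option maxHeartbeats 1000000 in
/-- ODE perturbation lemma (Lemma 4.1): the bound `|η₀| ≤ C₀ ε` for the unperturbed model
ODE is stable under small perturbations of the data and the equation:
`|η(t,ξ)| ≤ C₀ ε + M ε^{1+δ} ≤ (C₀+1) ε` on `[t_*, T_*)`. -/
theorem ode_perturbation_lemma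
    (d : ℕ) (a b : ℝ) (ha0 : 0 < a) (ha1 : a < 1) (hb : 0 < b)
    (lam : ℂ) (hlam : 0 < lam.im)
    (ψ₀ : (Fin d → ℝ) → ℂ) (hψ₀cont : Continuous ψ₀)
    (Ψ₀ : ℝ) (hΨ₀pos : 0 < Ψ₀) (hΨ₀ : ∀ ξ, ‖ψ₀ ξ‖ ≤ Ψ₀)
    (q τ₁ : ℝ) (hq : q = b / (2 * (1 - a))) (hτ₁pos : 0 < τ₁)
    (hτ₁ : 1 / τ₁ = (2 * q * lam.im * Ψ₀ ^ b) ^ (1 / (1 - a)))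
    (tstar Tbar : ℝ) (htstar : 0 < tstar) (hTbar : tstar < Tbar)
    (C₁ C₂ δ ε : ℝ) (hC₁ : 0 < C₁) (hC₂ : 0 < C₂) (hδ : 0 < δ)
    (ψ₁ : (Fin d → ℝ) → ℂ) (hψ₁cont : Continuous ψ₁)
    (hψ₁ : ∀ ξ, ‖ψ₁ ξ‖ ≤ C₁ * ε ^ (1 + δ))
    (ρ : ℝ → (Fin d → ℝ) → ℂ)
    (hρcont : Continuous fun p : ℝ × (Fin d → ℝ) => ρ p.1 p.2)
    (hρ : ∀ t ∈ Set.Ico tstar Tbar, ∀ ξ,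
      ‖ρ t ξ‖ ≤ C₂ * ε ^ (1 + b + δ) / t ^ a)
    (η η' : ℝ → (Fin d → ℝ) → ℂ)
    (hηcont : ∀ ξ, ContinuousOn (fun t => η t ξ) (Set.Ico tstar Tbar))
    (hηderiv : ∀ ξ, ∀ t ∈ Set.Ioo tstar Tbar, HasDerivAt (fun s => η s ξ) (η' t ξ) t)
    (hηeq : ∀ ξ, ∀ t ∈ Set.Ioo tstar Tbar,
      Complex.I * η' t ξ =
        (lam / (↑(t ^ a) : ℂ)) * (↑(‖η t ξ‖ ^ b) : ℂ) * η t ξ + ρ t ξ)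
    (hηinit : ∀ ξ, η tstar ξ = (ε : ℂ) * ψ₀ ξ + ψ₁ ξ)
    (σ : ℝ) (hσ0 : 0 < σ) (hστ : σ < τ₁)
    (Tst : ℝ) (hTst : Tst = min Tbar (σ * ε ^ (-(2 * q))))
    (C₀ C₃ M : ℝ)
    (hC₀ : C₀ = Ψ₀ / (1 - (σ / τ₁) ^ (1 - a)) ^ (1 / b))
    (hC₃ : C₃ = 2 * ‖lam‖ * (b + 1) * (2 * C₀ + 1) ^ b + 1 / 2)
    (hM : M = 2 * (C₁ ^ 2 + C₂ ^ 2 / (2 * C₃)) ^ ((1 : ℝ) / 2) *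
        Real.exp (C₃ * σ ^ (1 - a) / (2 * (1 - a))))
    (hε0 : 0 < ε)
    (hε : ε ≤ min 1 (min (σ ^ (-(1 / q))) (M ^ (-(1 / δ)))))    :
    ∀ t ∈ Set.Ico tstar Tst, ∀ ξ,
      ‖η t ξ‖ ≤ C₀ * ε + M * ε ^ (1 + δ) ∧
      C₀ * ε + M * ε ^ (1 + δ) ≤ (C₀ + 1) * ε := by
  intro t₀ ht₀ ξ
  obtain ⟨ht₀l, ht₀r⟩ := ht₀
  have h1a : 0 < 1 - a := by linarith
  have hqpos : 0 < q := by rw [hq]; positivity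
  have h2q : 2 * q * (1 - a) = b := by rw [hq]; field_simp
  have hκlt : (σ / τ₁) ^ (1 - a) < 1 :=
    Real.rpow_lt_one (by positivity) ((div_lt_one hτ₁pos).2 hστ) h1a
  have hκnn : 0 ≤ (σ / τ₁) ^ (1 - a) := Real.rpow_nonneg (by positivity) _
  have hβ : 0 < 1 - (σ / τ₁) ^ (1 - a) := by linarith
  have hβpow : 0 < (1 - (σ / τ₁) ^ (1 - a)) ^ (1 / b) := Real.rpow_pos_of_pos hβ _
  have hC₀pos : 0 < C₀ := by rw [hC₀]; exact div_pos hΨ₀pos hβpow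
  have hΨC₀ : Ψ₀ ≤ C₀ := by
    have hle1 : (1 - (σ / τ₁) ^ (1 - a)) ^ (1 / b) ≤ 1 :=
      Real.rpow_le_one hβ.le (by linarith) (by positivity)
    rw [hC₀, le_div_iff₀ hβpow]
    nlinarith
  have hC₃pos : 0 < C₃ := by
    have h : 0 ≤ 2 * ‖lam‖ * (b + 1) * (2 * C₀ + 1) ^ b :=
      mul_nonneg (mul_nonneg (by positivity) (by linarith)) (Real.rpow_nonneg (by linarith) _)
    rw [hC₃]; linarith
  have hSpos : 0 < C₁ ^ 2 + C₂ ^ 2 / (2 * C₃) :=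
    add_pos_of_pos_of_nonneg (pow_pos hC₁ 2) (div_nonneg (sq_nonneg _) (by linarith))
  have hMpos : 0 < M := by
    rw [hM]
    exact mul_pos (mul_pos two_pos (Real.rpow_pos_of_pos hSpos _)) (Real.exp_pos _)
  have hε1 : ε ≤ 1 := le_trans hε (min_le_left _ _)
  have hεM' : ε ≤ M ^ (-(1 / δ)) :=
    le_trans hε (le_trans (min_le_right _ _) (min_le_right _ _))
  have hεδpos : 0 < ε ^ (1 + δ) := Real.rpow_pos_of_pos hε0 _
  have hMe : M * ε ^ (1 + δ) ≤ ε := by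
    have h1 : ε ^ δ ≤ M ^ (-(1 / δ) * δ) := by
      rw [Real.rpow_mul hMpos.le]
      exact Real.rpow_le_rpow hε0.le hεM' hδ.le
    have h2 : M ^ (-(1 / δ) * δ) = M⁻¹ := by
      rw [show -(1 / δ) * δ = -1 by field_simp, Real.rpow_neg_one]
    have h3 : M * ε ^ δ ≤ 1 := by
      rw [h2] at h1
      calc M * ε ^ δ ≤ M * M⁻¹ := mul_le_mul_of_nonneg_left h1 hMpos.le
        _ = 1 := mul_inv_cancel₀ hMpos.ne'
    calc M * ε ^ (1 + δ) = (M * ε ^ δ) * ε := by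
          rw [Real.rpow_add hε0, Real.rpow_one]; ring
      _ ≤ 1 * ε := mul_le_mul_of_nonneg_right h3 hε0.le
      _ = ε := one_mul ε
  have hT1 : t₀ < Tbar := lt_of_lt_of_le ht₀r (hTst ▸ min_le_left _ _)
  have hT2 : t₀ < σ * ε ^ (-(2 * q)) := lt_of_lt_of_le ht₀r (hTst ▸ min_le_right _ _)
  have hscale : ∀ t, tstar ≤ t → t ≤ t₀ → ε ^ b * t ^ (1 - a) ≤ σ ^ (1 - a) := by
    intro t hts htt
    have ht0 : 0 < t := lt_of_lt_of_le htstar hts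
    have h2 : t ≤ σ * ε ^ (-(2 * q)) := le_of_lt (lt_of_le_of_lt htt hT2)
    have h3 : t ^ (1 - a) ≤ (σ * ε ^ (-(2 * q))) ^ (1 - a) :=
      Real.rpow_le_rpow ht0.le h2 h1a.le
    have h4 : (σ * ε ^ (-(2 * q))) ^ (1 - a) = σ ^ (1 - a) * ε ^ (-b) := by
      rw [Real.mul_rpow hσ0.le (Real.rpow_nonneg hε0.le _), ← Real.rpow_mul hε0.le]
      congr 1
      rw [← h2q]; ring
    have h6 : t ^ (1 - a) ≤ σ ^ (1 - a) * ε ^ (-b) := h4 ▸ h3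
    calc ε ^ b * t ^ (1 - a) ≤ ε ^ b * (σ ^ (1 - a) * ε ^ (-b)) :=
          mul_le_mul_of_nonneg_left h6 (Real.rpow_nonneg hε0.le b)
      _ = σ ^ (1 - a) * (ε ^ b * ε ^ (-b)) := by ring
      _ = σ ^ (1 - a) := by rw [← Real.rpow_add hε0]; simp
  set c0 : ℝ := 2 * q * lam.im * (ε * ‖ψ₀ ξ‖) ^ b with hc0def
  set K : ℝ → ℝ := fun t => c0 * (t ^ (1 - a) - tstar ^ (1 - a)) with hKdef
  set γ : ℂ := Complex.I * lam / ((b * lam.im : ℝ) : ℂ) with hγdef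
  set e0 : ℝ → ℂ := fun t => ((ε : ℂ) * ψ₀ ξ) *
      Complex.exp (γ * ((Real.log (1 - K t) : ℝ) : ℂ)) with he0def
  set w : ℝ → ℂ := fun t => η t ξ - e0 t with hwdef
  have hc0nn : 0 ≤ c0 := by
    have : 0 ≤ (ε * ‖ψ₀ ξ‖) ^ b :=
      Real.rpow_nonneg (mul_nonneg hε0.le (norm_nonneg _)) _
    rw [hc0def]; positivity
  have hKnn : ∀ t, tstar ≤ t → 0 ≤ K t := by
    intro t hts
    have : tstar ^ (1 - a) ≤ t ^ (1 - a) := Real.rpow_le_rpow htstar.le hts h1a.le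
    rw [hKdef]
    exact mul_nonneg hc0nn (by linarith)
  have hKub : ∀ t, tstar ≤ t → t ≤ t₀ → K t ≤ (σ / τ₁) ^ (1 - a) := by
    intro t hts htt
    have ht0 : 0 < t := lt_of_lt_of_le htstar hts
    have htsnn : 0 ≤ tstar ^ (1 - a) := Real.rpow_nonneg htstar.le _
    have hqim : 0 ≤ 2 * q * lam.im := by positivity
    have h1 : K t ≤ c0 * t ^ (1 - a) := by
      rw [hKdef]
      exact mul_le_mul_of_nonneg_left (sub_le_self _ htsnn) hc0nn
    have hc0le : c0 ≤ 2 * q * lam.im * (Ψ₀ ^ b * ε ^ b) := by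
      have h2 : (ε * ‖ψ₀ ξ‖) ^ b ≤ (ε * Ψ₀) ^ b :=
        Real.rpow_le_rpow (mul_nonneg hε0.le (norm_nonneg _))
          (mul_le_mul_of_nonneg_left (hΨ₀ ξ) hε0.le) hb.le
      have h3 : (ε * Ψ₀) ^ b = Ψ₀ ^ b * ε ^ b := by
        rw [Real.mul_rpow hε0.le hΨ₀pos.le]; ring
      rw [hc0def]
      exact mul_le_mul_of_nonneg_left (h3 ▸ h2) hqim
    have hXnn : 0 ≤ 2 * q * lam.im * Ψ₀ ^ b := by
      have := Real.rpow_nonneg hΨ₀pos.le b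
      positivity
    have hX : (2 * q * lam.im * Ψ₀ ^ b) * σ ^ (1 - a) = (σ / τ₁) ^ (1 - a) := by
      have h5 : ((2 * q * lam.im * Ψ₀ ^ b) ^ (1 / (1 - a))) ^ (1 - a)
          = 2 * q * lam.im * Ψ₀ ^ b := by
        rw [← Real.rpow_mul hXnn, one_div, inv_mul_cancel₀ h1a.ne', Real.rpow_one]
      rw [div_eq_mul_inv σ τ₁, Real.mul_rpow hσ0.le (by positivity), ← one_div τ₁, hτ₁, h5]
      ring
    have h6 : c0 * t ^ (1 - a) ≤ (2 * q * lam.im * Ψ₀ ^ b) * (ε ^ b * t ^ (1 - a)) := by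
      have h7 := Real.rpow_nonneg ht0.le (1 - a)
      calc c0 * t ^ (1 - a) ≤ (2 * q * lam.im * (Ψ₀ ^ b * ε ^ b)) * t ^ (1 - a) :=
            mul_le_mul_of_nonneg_right hc0le h7
        _ = (2 * q * lam.im * Ψ₀ ^ b) * (ε ^ b * t ^ (1 - a)) := by ring
    have h8 : (2 * q * lam.im * Ψ₀ ^ b) * (ε ^ b * t ^ (1 - a)) ≤
        (2 * q * lam.im * Ψ₀ ^ b) * σ ^ (1 - a) :=
      mul_le_mul_of_nonneg_left (hscale t hts htt) hXnn
    linarith [hX ▸ h8]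
  have h1K : ∀ t, tstar ≤ t → t ≤ t₀ → 1 - (σ / τ₁) ^ (1 - a) ≤ 1 - K t := by
    intro t hts htt
    have := hKub t hts htt
    linarith
  have h1Kpos : ∀ t, tstar ≤ t → t ≤ t₀ → 0 < 1 - K t := by
    intro t hts htt
    linarith [h1K t hts htt]
  have hγre : γ.re = -(1 / b) := by
    rw [hγdef, Complex.div_ofReal_re, Complex.I_mul_re]
    field_simp
  have habs_e0_eq : ∀ t, ‖e0 t‖
      = ε * ‖ψ₀ ξ‖ * Real.exp (-(1 / b) * Real.log (1 - K t)) := by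
    intro t
    rw [he0def]
    simp only [norm_mul, Complex.norm_exp, Complex.norm_real, Real.norm_eq_abs, abs_of_pos hε0]
    congr 2
    simp [Complex.mul_re, hγre]
  have habs_e0_le : ∀ t, tstar ≤ t → t ≤ t₀ → ‖e0 t‖ ≤ C₀ * ε := by
    intro t hts htt
    rw [habs_e0_eq t]
    have h1 : Real.exp (-(1 / b) * Real.log (1 - K t)) = (1 - K t) ^ (-(1 / b)) := by
      rw [Real.rpow_def_of_pos (h1Kpos t hts htt), mul_comm]
    have h2 : (1 - K t) ^ (-(1 / b)) ≤ (1 - (σ / τ₁) ^ (1 - a)) ^ (-(1 / b)) :=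
      Real.rpow_le_rpow_of_nonpos hβ (h1K t hts htt) (neg_nonpos.mpr (by positivity))
    have h3 : Ψ₀ * (1 - (σ / τ₁) ^ (1 - a)) ^ (-(1 / b)) = C₀ := by
      rw [hC₀, Real.rpow_neg hβ.le]
      exact (div_eq_mul_inv _ _).symm
    have h4 : ‖ψ₀ ξ‖ * Real.exp (-(1 / b) * Real.log (1 - K t)) ≤
        Ψ₀ * (1 - (σ / τ₁) ^ (1 - a)) ^ (-(1 / b)) := by
      rw [h1]
      exact mul_le_mul (hΨ₀ ξ) h2 (Real.rpow_nonneg (h1Kpos t hts htt).le _) hΨ₀pos.le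
    calc ε * ‖ψ₀ ξ‖ * Real.exp (-(1 / b) * Real.log (1 - K t))
        = (‖ψ₀ ξ‖ * Real.exp (-(1 / b) * Real.log (1 - K t))) * ε := by ring
      _ ≤ (Ψ₀ * (1 - (σ / τ₁) ^ (1 - a)) ^ (-(1 / b))) * ε :=
          mul_le_mul_of_nonneg_right h4 hε0.le
      _ = C₀ * ε := by rw [h3]
  have habsb : ∀ t, tstar ≤ t → t ≤ t₀ →
      ‖e0 t‖ ^ b = (ε * ‖ψ₀ ξ‖) ^ b * (1 - K t)⁻¹ := by
    intro t hts htt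
    have h1K' := h1Kpos t hts htt
    rw [habs_e0_eq t,
      Real.mul_rpow (mul_nonneg hε0.le (norm_nonneg _)) (Real.exp_pos _).le]
    congr 1
    have h1 : Real.exp (-(1 / b) * Real.log (1 - K t)) ^ b
        = Real.exp ((-(1 / b) * Real.log (1 - K t)) * b) := by
      rw [Real.rpow_def_of_pos (Real.exp_pos _), Real.log_exp]
    rw [h1, show (-(1 / b) * Real.log (1 - K t)) * b = -Real.log (1 - K t) by field_simp,
      Real.exp_neg, Real.exp_log h1K']
  have he0cont : ContinuousOn e0 (Set.Icc tstar t₀) := by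
    rw [he0def]
    apply ContinuousOn.mul continuousOn_const
    apply Complex.continuous_exp.comp_continuousOn
    apply ContinuousOn.mul continuousOn_const
    apply Complex.continuous_ofReal.comp_continuousOn
    apply ContinuousOn.log
    · apply ContinuousOn.sub continuousOn_const
      rw [hKdef]
      apply ContinuousOn.mul continuousOn_const
      apply ContinuousOn.sub _ continuousOn_const
      exact ContinuousOn.rpow_const continuousOn_id
        (fun x hx => Or.inl (ne_of_gt (lt_of_lt_of_le htstar hx.1)))
    · intro t ht; exact (h1Kpos t ht.1 ht.2).ne'
  set d0 : ℝ → ℂ := fun t => e0 t *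
      (γ * ((-(c0 * ((1 - a) * t ^ (1 - a - 1))) / (1 - K t) : ℝ) : ℂ)) with hd0def
  have hd0 : ∀ t, tstar < t → t ≤ t₀ → HasDerivAt e0 (d0 t) t := by
    intro t hts htt
    have ht0 : 0 < t := lt_trans htstar hts
    have h1K' : (0:ℝ) < 1 - K t := h1Kpos t hts.le htt
    have hK' : HasDerivAt K (c0 * ((1 - a) * t ^ (1 - a - 1))) t := by
      rw [hKdef]
      exact ((Real.hasDerivAt_rpow_const (Or.inl ht0.ne')).sub_const _).const_mul c0
    have h1K'' : HasDerivAt (fun s => 1 - K s)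
        (-(c0 * ((1 - a) * t ^ (1 - a - 1)))) t := hK'.const_sub 1
    have hlog : HasDerivAt (fun s => Real.log (1 - K s))
        (-(c0 * ((1 - a) * t ^ (1 - a - 1))) / (1 - K t)) t := h1K''.log h1K'.ne'
    have hexp := ((hlog.ofReal_comp).const_mul γ).cexp
    have hfin := hexp.const_mul ((ε : ℂ) * ψ₀ ξ)
    rw [he0def, hd0def]
    exact hfin.congr_deriv (by ring)
  have hIγ : Complex.I * γ = -lam / ((b * lam.im : ℝ) : ℂ) := by
    rw [hγdef, mul_div_assoc', ← mul_assoc, Complex.I_mul_I, neg_one_mul]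
  have he0eq : ∀ t, tstar < t → t ≤ t₀ →
      Complex.I * d0 t
        = (lam / ((t ^ a : ℝ) : ℂ)) * ((‖e0 t‖ ^ b : ℝ) : ℂ) * e0 t := by
    intro t hts htt
    have ht0 : 0 < t := lt_trans htstar hts
    have h1K' : (0:ℝ) < 1 - K t := h1Kpos t hts.le htt
    have hta : t ^ (1 - a - 1) = (t ^ a)⁻¹ := by
      rw [show (1 - a - 1 : ℝ) = -a by ring, Real.rpow_neg ht0.le]
    have hc0b : c0 * ((1 - a) * (t ^ a)⁻¹)
        = b * lam.im * (ε * ‖ψ₀ ξ‖) ^ b * (t ^ a)⁻¹ := by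
      rw [hc0def, ← h2q]; ring
    rw [hd0def, habsb t hts.le htt]
    simp only []
    rw [hta, hc0b]
    have h2 : Complex.I * (e0 t * (γ *
        ((-(b * lam.im * (ε * ‖ψ₀ ξ‖) ^ b * (t ^ a)⁻¹) / (1 - K t) : ℝ) : ℂ)))
        = (Complex.I * γ) *
          ((-(b * lam.im * (ε * ‖ψ₀ ξ‖) ^ b * (t ^ a)⁻¹) / (1 - K t) : ℝ) : ℂ)
            * e0 t := by ring
    rw [h2, hIγ]
    have hbim : (b * lam.im : ℝ) ≠ 0 := by positivity
    have htane : (t ^ a : ℝ) ≠ 0 := (Real.rpow_pos_of_pos ht0 a).ne'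
    rw [coeff_id lam (b * lam.im) ((ε * ‖ψ₀ ξ‖) ^ b) (t ^ a) (1 - K t)
      hbim htane h1K'.ne']
  have hwderiv : ∀ t, tstar < t → t ≤ t₀ → HasDerivAt w (η' t ξ - d0 t) t := by
    intro t h1 h2
    rw [hwdef]
    exact (hηderiv ξ t ⟨h1, lt_of_le_of_lt h2 hT1⟩).sub (hd0 t h1 h2)
  have hwd_eq : ∀ t, tstar < t → t ≤ t₀ →
      η' t ξ - d0 t = -Complex.I * ((lam / ((t ^ a : ℝ) : ℂ)) *
        (((‖η t ξ‖ ^ b : ℝ) : ℂ) * η t ξ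
          - ((‖e0 t‖ ^ b : ℝ) : ℂ) * e0 t) + ρ t ξ) := by
    intro t h1 h2
    have hI : η' t ξ - d0 t = -Complex.I * (Complex.I * (η' t ξ - d0 t)) := by
      rw [← mul_assoc, neg_mul, Complex.I_mul_I]; ring
    rw [hI, mul_sub Complex.I, hηeq ξ t ⟨h1, lt_of_le_of_lt h2 hT1⟩, he0eq t h1 h2]
    ring
  have hwtstar : w tstar = ψ₁ ξ := by
    have hK0 : K tstar = 0 := by rw [hKdef]; simp
    rw [hwdef]
    simp only [he0def, hK0, sub_zero, Real.log_one, Complex.ofReal_zero, mul_zero,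
      Complex.exp_zero, mul_one, hηinit ξ]
    ring
  have hIcoSub : Set.Icc tstar t₀ ⊆ Set.Ico tstar Tbar :=
    fun x hx => ⟨hx.1, lt_of_le_of_lt hx.2 hT1⟩
  have hwcont : ContinuousOn w (Set.Icc tstar t₀) := by
    rw [hwdef]
    exact ContinuousOn.sub ((hηcont ξ).mono hIcoSub) he0cont
  set Y : ℝ := C₃ * σ ^ (1 - a) / (1 - a) with hYdef
  have hYnn : 0 ≤ Y := by
    have := Real.rpow_nonneg hσ0.le (1 - a)
    rw [hYdef]; positivity
  set Mp : ℝ := Real.sqrt ((C₁ ^ 2 + 2 * C₂ ^ 2 / C₃) * Real.exp Y) with hMpdef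
  have step : ∀ c ∈ Set.Icc tstar t₀,
      (∀ s ∈ Set.Icc tstar c, ‖w s‖ ≤ M * ε ^ (1 + δ)) →
      ‖w c‖ ≤ Mp * ε ^ (1 + δ) := by
    intro c hc hboot
    set D : ℝ := 2 * C₂ ^ 2 * ε ^ (2 * (1 + δ)) / C₃ with hDdef
    have hDnn : 0 ≤ D := by
      have := Real.rpow_nonneg hε0.le (2 * (1 + δ))
      rw [hDdef]; positivity
    have hFc : ContinuousOn (fun t => Complex.normSq (w t)) (Set.Icc tstar c) :=
      Complex.continuous_normSq.comp_continuousOn (hwcont.mono (Set.Icc_subset_Icc_right hc.2))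
    have hJc : ContinuousOn
        (fun t => C₃ * ε ^ b * (t ^ (1 - a) - tstar ^ (1 - a)) / (1 - a))
        (Set.Icc tstar c) := by
      apply ContinuousOn.div_const
      apply ContinuousOn.mul continuousOn_const
      apply ContinuousOn.sub _ continuousOn_const
      exact ContinuousOn.rpow_const continuousOn_id
        (fun x hx => Or.inl (ne_of_gt (lt_of_lt_of_le htstar hx.1)))
    have hFd : ∀ t ∈ Set.Ioo tstar c, HasDerivAt (fun t => Complex.normSq (w t))
        (2 * ((w t).re * (η' t ξ - d0 t).re + (w t).im * (η' t ξ - d0 t).im)) t :=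
      fun t ht => normSq_deriv (hwderiv t ht.1 (le_trans ht.2.le hc.2))
    have hJd : ∀ t ∈ Set.Ioo tstar c, HasDerivAt
        (fun t => C₃ * ε ^ b * (t ^ (1 - a) - tstar ^ (1 - a)) / (1 - a))
        (C₃ * ε ^ b / t ^ a) t := by
      intro t ht
      have ht0 : 0 < t := lt_trans htstar ht.1
      have h := (((Real.hasDerivAt_rpow_const (p := 1 - a)
        (Or.inl ht0.ne')).sub_const (tstar ^ (1 - a))).const_mul (C₃ * ε ^ b)).div_const (1 - a)
      refine h.congr_deriv ?_
      rw [show (1 - a - 1 : ℝ) = -a by ring, Real.rpow_neg ht0.le]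
      have htane : (t ^ a : ℝ) ≠ 0 := (Real.rpow_pos_of_pos ht0 a).ne'
      field_simp
    have hle : ∀ t ∈ Set.Ioo tstar c,
        2 * ((w t).re * (η' t ξ - d0 t).re + (w t).im * (η' t ξ - d0 t).im) ≤
        (C₃ * ε ^ b / t ^ a) * (Complex.normSq (w t) + D) := by
      intro t ht
      have ht0 : 0 < t := lt_trans htstar ht.1
      have htt : t ≤ t₀ := le_trans ht.2.le hc.2
      have hta0 : (0:ℝ) < t ^ a := Real.rpow_pos_of_pos ht0 a
      have heb0 : (0:ℝ) < ε ^ b := Real.rpow_pos_of_pos hε0 b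
      have hwb : ‖w t‖ ≤ M * ε ^ (1 + δ) := hboot t ⟨ht.1.le, ht.2.le⟩
      have hyb : ‖e0 t‖ ≤ C₀ * ε := habs_e0_le t ht.1.le htt
      have hC₀ε : (0:ℝ) ≤ C₀ * ε := mul_nonneg hC₀pos.le hε0.le
      have hηval : η t ξ = e0 t + w t := by rw [hwdef]; ring
      have hxb : ‖η t ξ‖ ≤ (2 * C₀ + 1) * ε := by
        calc ‖η t ξ‖ ≤ ‖e0 t‖ + ‖w t‖ := by
              rw [hηval]; exact norm_add_le _ _
          _ ≤ C₀ * ε + ε := by linarith [hMe]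
          _ ≤ (2 * C₀ + 1) * ε := by
              have hexp2 : (2 * C₀ + 1) * ε = C₀ * ε + (C₀ * ε + ε) := by ring
              linarith [hC₀ε]
      have hyb' : ‖e0 t‖ ≤ (2 * C₀ + 1) * ε := by
        have hexp2 : (2 * C₀ + 1) * ε = C₀ * ε + (C₀ * ε + ε) := by ring
        linarith [hC₀ε, hε0.le]
      have hRnn : (0:ℝ) ≤ (2 * C₀ + 1) * ε :=
        mul_nonneg (by linarith) hε0.le
      have hlip := l1 hb hRnn hxb hyb'
      have hwt : η t ξ - e0 t = w t := by rw [hwdef]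
      rw [hwt] at hlip
      have hρb := hρ t ⟨ht.1.le, lt_of_le_of_lt htt hT1⟩ ξ
      have hwdabs : ‖η' t ξ - d0 t‖ ≤
          ‖lam‖ / t ^ a * ((b + 1) * ((2 * C₀ + 1) * ε) ^ b * ‖w t‖)
            + C₂ * ε ^ (1 + b + δ) / t ^ a := by
        rw [hwd_eq t ht.1 htt]
        have hnegI : ‖-Complex.I‖ = 1 := by simp
        rw [norm_mul, hnegI, one_mul]
        have h1 : ‖lam / ((t ^ a : ℝ) : ℂ)‖ = ‖lam‖ / t ^ a := by
          rw [norm_div, Complex.norm_real, Real.norm_eq_abs, abs_of_pos hta0]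
        calc ‖_‖ ≤ ‖(lam / ((t ^ a : ℝ) : ℂ)) *
              (((‖η t ξ‖ ^ b : ℝ) : ℂ) * η t ξ
                - ((‖e0 t‖ ^ b : ℝ) : ℂ) * e0 t)‖ + ‖ρ t ξ‖ :=
              norm_add_le _ _
          _ ≤ ‖lam‖ / t ^ a *
                ((b + 1) * ((2 * C₀ + 1) * ε) ^ b * ‖w t‖)
              + C₂ * ε ^ (1 + b + δ) / t ^ a := by
              rw [norm_mul, h1]
              exact add_le_add (mul_le_mul_of_nonneg_left hlip (by positivity)) hρb
      -- abbreviations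
      set u : ℝ := ‖w t‖ with hudef
      have hunn : 0 ≤ u := norm_nonneg _
      set P : ℝ := C₂ * ε ^ (1 + b + δ) / t ^ a with hPdef
      have hPnn : 0 ≤ P := by
        have := Real.rpow_nonneg hε0.le (1 + b + δ)
        rw [hPdef]; positivity
      set A : ℝ := ε ^ b / (2 * t ^ a) with hAdef
      have hApos : 0 < A := by rw [hAdef]; positivity
      set L : ℝ := ‖lam‖ / t ^ a * ((b + 1) * ((2 * C₀ + 1) * ε) ^ b) with hLdef
      have hLnn : 0 ≤ L := by
        have := Real.rpow_nonneg hRnn b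
        rw [hLdef]; positivity
      have hre : (w t).re * (η' t ξ - d0 t).re + (w t).im * (η' t ξ - d0 t).im ≤
          u * ‖η' t ξ - d0 t‖ := by
        have h1 : (w t).re * (η' t ξ - d0 t).re + (w t).im * (η' t ξ - d0 t).im
            = ((starRingEnd ℂ) (w t) * (η' t ξ - d0 t)).re := by
          simp [Complex.mul_re, Complex.conj_re, Complex.conj_im]
        rw [h1, hudef]
        calc ((starRingEnd ℂ) (w t) * (η' t ξ - d0 t)).re
            ≤ ‖(starRingEnd ℂ) (w t) * (η' t ξ - d0 t)‖ := Complex.re_le_norm _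
          _ = ‖w t‖ * ‖η' t ξ - d0 t‖ := by
              rw [norm_mul, Complex.norm_conj]
      have hwd2 : ‖η' t ξ - d0 t‖ ≤ L * u + P := by
        rw [hLdef, hPdef, hudef]
        calc ‖η' t ξ - d0 t‖ ≤ _ := hwdabs
          _ = ‖lam‖ / t ^ a * ((b + 1) * ((2 * C₀ + 1) * ε) ^ b) *
                ‖w t‖ + C₂ * ε ^ (1 + b + δ) / t ^ a := by ring
      have hAM : 2 * u * P ≤ A * u ^ 2 + P ^ 2 / A := by
        rw [← sub_nonneg]
        have h2 : A * u ^ 2 + P ^ 2 / A - 2 * u * P = (A * u - P) ^ 2 / A := by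
          field_simp; ring
        rw [h2]; positivity
      have hRb : ((2 * C₀ + 1) * ε) ^ b = (2 * C₀ + 1) ^ b * ε ^ b :=
        Real.mul_rpow (by linarith) hε0.le
      have hLA : 2 * L + A = C₃ * ε ^ b / t ^ a := by
        rw [hLdef, hAdef, hRb, hC₃]
        field_simp
      have hPA : P ^ 2 / A = D * (C₃ * ε ^ b / t ^ a) := by
        have he1 : (ε ^ (1 + b + δ)) ^ 2 = ε ^ (2 * (1 + δ)) * ε ^ b * ε ^ b := by
          rw [sq, ← Real.rpow_add hε0, ← Real.rpow_add hε0, ← Real.rpow_add hε0]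
          congr 1
          ring
        have htane : (t ^ a : ℝ) ≠ 0 := hta0.ne'
        have hebne : (ε ^ b : ℝ) ≠ 0 := heb0.ne'
        have hp1 : P ^ 2 / A = 2 * C₂ ^ 2 * (ε ^ (1 + b + δ)) ^ 2 / (t ^ a * ε ^ b) := by
          rw [hPdef, hAdef]
          field_simp
        have hp2 : D * (C₃ * ε ^ b / t ^ a)
            = 2 * C₂ ^ 2 * (ε ^ (2 * (1 + δ)) * ε ^ b) / t ^ a := by
          rw [hDdef]
          field_simp
        rw [hp1, hp2, he1]
        field_simp
      have htotal : 2 * (u * ‖η' t ξ - d0 t‖) ≤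
          (C₃ * ε ^ b / t ^ a) * (u ^ 2 + D) := by
        have h3 : u * ‖η' t ξ - d0 t‖ ≤ u * (L * u + P) :=
          mul_le_mul_of_nonneg_left hwd2 hunn
        have h4 : 2 * (u * (L * u + P)) = 2 * L * u ^ 2 + 2 * u * P := by ring
        have h5 : 2 * L * u ^ 2 + 2 * u * P ≤ 2 * L * u ^ 2 + (A * u ^ 2 + P ^ 2 / A) := by
          linarith
        have h6 : 2 * L * u ^ 2 + (A * u ^ 2 + P ^ 2 / A)
            = (2 * L + A) * u ^ 2 + P ^ 2 / A := by ring
        have h7 : (2 * L + A) * u ^ 2 + P ^ 2 / A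
            = (C₃ * ε ^ b / t ^ a) * u ^ 2 + D * (C₃ * ε ^ b / t ^ a) := by
          rw [hLA, hPA]
        linarith
      have hsq : u ^ 2 = Complex.normSq (w t) := Complex.sq_norm _
      calc 2 * ((w t).re * (η' t ξ - d0 t).re + (w t).im * (η' t ξ - d0 t).im)
          ≤ 2 * (u * ‖η' t ξ - d0 t‖) := by linarith [hre]
        _ ≤ (C₃ * ε ^ b / t ^ a) * (u ^ 2 + D) := htotal
        _ = (C₃ * ε ^ b / t ^ a) * (Complex.normSq (w t) + D) := by rw [hsq]
    have hJ0 : C₃ * ε ^ b * (tstar ^ (1 - a) - tstar ^ (1 - a)) / (1 - a) = 0 := by simp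
    have hg := gron hc.1 hDnn hFc hJc hFd hJd hle hJ0
    -- post-processing
    have hJcb : C₃ * ε ^ b * (c ^ (1 - a) - tstar ^ (1 - a)) / (1 - a) ≤ Y := by
      rw [hYdef]
      rw [div_le_div_iff_of_pos_right h1a]
      have h1 : ε ^ b * (c ^ (1 - a) - tstar ^ (1 - a)) ≤ σ ^ (1 - a) := by
        have h2 : ε ^ b * (c ^ (1 - a) - tstar ^ (1 - a)) ≤ ε ^ b * c ^ (1 - a) := by
          have h3 : 0 ≤ tstar ^ (1 - a) := Real.rpow_nonneg htstar.le _
          have h4 : 0 ≤ ε ^ b := Real.rpow_nonneg hε0.le _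
          have h5 : ε ^ b * (c ^ (1 - a) - tstar ^ (1 - a))
              = ε ^ b * c ^ (1 - a) - ε ^ b * tstar ^ (1 - a) := by ring
          linarith [mul_nonneg h4 h3]
        exact le_trans h2 (hscale c hc.1 hc.2)
      calc C₃ * ε ^ b * (c ^ (1 - a) - tstar ^ (1 - a))
          = C₃ * (ε ^ b * (c ^ (1 - a) - tstar ^ (1 - a))) := by ring
        _ ≤ C₃ * σ ^ (1 - a) := mul_le_mul_of_nonneg_left h1 hC₃pos.le
    have hFt : Complex.normSq (w tstar) ≤ C₁ ^ 2 * (ε ^ (1 + δ)) ^ 2 := by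
      rw [hwtstar, ← Complex.sq_norm]
      calc ‖ψ₁ ξ‖ ^ 2 ≤ (C₁ * ε ^ (1 + δ)) ^ 2 :=
            pow_le_pow_left₀ (norm_nonneg _) (hψ₁ ξ) 2
        _ = C₁ ^ 2 * (ε ^ (1 + δ)) ^ 2 := by ring
    have hexple : Real.exp (C₃ * ε ^ b * (c ^ (1 - a) - tstar ^ (1 - a)) / (1 - a))
        ≤ Real.exp Y := Real.exp_le_exp.2 hJcb
    have hbase_nn : 0 ≤ Complex.normSq (w tstar) + D :=
      add_nonneg (Complex.normSq_nonneg _) hDnn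
    have hD2 : D = 2 * C₂ ^ 2 / C₃ * (ε ^ (1 + δ)) ^ 2 := by
      rw [hDdef, show (2 * (1 + δ) : ℝ) = (1 + δ) + (1 + δ) by ring, Real.rpow_add hε0, sq]
      ring
    have hfin2 : Complex.normSq (w c) ≤
        ((C₁ ^ 2 + 2 * C₂ ^ 2 / C₃) * Real.exp Y) * (ε ^ (1 + δ)) ^ 2 := by
      have hstep1 := mul_le_mul_of_nonneg_left hexple hbase_nn
      have hstep2 : Complex.normSq (w tstar) + D ≤
          (C₁ ^ 2 + 2 * C₂ ^ 2 / C₃) * (ε ^ (1 + δ)) ^ 2 := by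
        rw [hD2] at *
        linarith [hFt]
      calc Complex.normSq (w c)
          ≤ (Complex.normSq (w tstar) + D) *
              Real.exp (C₃ * ε ^ b * (c ^ (1 - a) - tstar ^ (1 - a)) / (1 - a)) - D := hg
        _ ≤ (Complex.normSq (w tstar) + D) * Real.exp Y := by linarith
        _ ≤ ((C₁ ^ 2 + 2 * C₂ ^ 2 / C₃) * (ε ^ (1 + δ)) ^ 2) * Real.exp Y :=
            mul_le_mul_of_nonneg_right hstep2 (Real.exp_pos _).le
        _ = ((C₁ ^ 2 + 2 * C₂ ^ 2 / C₃) * Real.exp Y) * (ε ^ (1 + δ)) ^ 2 := by ring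
    have hfactnn : 0 ≤ (C₁ ^ 2 + 2 * C₂ ^ 2 / C₃) * Real.exp Y :=
      mul_nonneg (add_nonneg (sq_nonneg _)
        (div_nonneg (by positivity) hC₃pos.le)) (Real.exp_pos _).le
    rw [Complex.norm_def]
    calc Real.sqrt (Complex.normSq (w c))
        ≤ Real.sqrt (((C₁ ^ 2 + 2 * C₂ ^ 2 / C₃) * Real.exp Y) * (ε ^ (1 + δ)) ^ 2) :=
          Real.sqrt_le_sqrt hfin2
      _ = Mp * ε ^ (1 + δ) := by
          rw [Real.sqrt_mul hfactnn, Real.sqrt_sq hεδpos.le, hMpdef]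
  have hMpnn : 0 ≤ Mp := Real.sqrt_nonneg _
  have hM2 : M ^ 2 = 4 * (C₁ ^ 2 + C₂ ^ 2 / (2 * C₃)) * Real.exp Y := by
    have e1 : (Real.exp (C₃ * σ ^ (1 - a) / (2 * (1 - a)))) ^ 2 = Real.exp Y := by
      rw [sq, ← Real.exp_add, hYdef]
      congr 1
      field_simp
      ring
    have e2 : ((C₁ ^ 2 + C₂ ^ 2 / (2 * C₃)) ^ ((1 : ℝ) / 2)) ^ 2
        = C₁ ^ 2 + C₂ ^ 2 / (2 * C₃) := by
      rw [← Real.rpow_natCast ((C₁ ^ 2 + C₂ ^ 2 / (2 * C₃)) ^ ((1 : ℝ) / 2)) 2,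
        ← Real.rpow_mul hSpos.le]
      norm_num
    calc M ^ 2 = 2 ^ 2 * ((C₁ ^ 2 + C₂ ^ 2 / (2 * C₃)) ^ ((1 : ℝ) / 2)) ^ 2 *
          (Real.exp (C₃ * σ ^ (1 - a) / (2 * (1 - a)))) ^ 2 := by rw [hM]; ring
      _ = 4 * (C₁ ^ 2 + C₂ ^ 2 / (2 * C₃)) * Real.exp Y := by rw [e1, e2]; norm_num
  have hMpM : Mp < M := by
    have hMp2 : Mp ^ 2 = (C₁ ^ 2 + 2 * C₂ ^ 2 / C₃) * Real.exp Y := by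
      rw [hMpdef]
      exact Real.sq_sqrt (mul_nonneg (add_nonneg (sq_nonneg _)
        (div_nonneg (by positivity) hC₃pos.le)) (Real.exp_pos _).le)
    have hradlt : C₁ ^ 2 + 2 * C₂ ^ 2 / C₃ < 4 * (C₁ ^ 2 + C₂ ^ 2 / (2 * C₃)) := by
      have h4 : 4 * (C₂ ^ 2 / (2 * C₃)) = 2 * C₂ ^ 2 / C₃ := by
        field_simp
        ring
      have h5 : 4 * (C₁ ^ 2 + C₂ ^ 2 / (2 * C₃))
          = 4 * C₁ ^ 2 + 4 * (C₂ ^ 2 / (2 * C₃)) := by ring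
      linarith [pow_pos hC₁ 2]
    have hsqlt : Mp ^ 2 < M ^ 2 := by
      rw [hMp2, hM2]
      exact mul_lt_mul_of_pos_right hradlt (Real.exp_pos _)
    exact lt_of_pow_lt_pow_left₀ 2 hMpos.le hsqlt
  have hC₁M : C₁ < M := by
    have h1 : C₁ ^ 2 < M ^ 2 := by
      rw [hM2]
      have hd : 0 ≤ C₂ ^ 2 / (2 * C₃) :=
        div_nonneg (sq_nonneg C₂) (by linarith : (0:ℝ) ≤ 2 * C₃)
      have hS4 : 0 < 4 * (C₁ ^ 2 + C₂ ^ 2 / (2 * C₃)) := by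
        have := pow_pos hC₁ 2
        linarith
      have h6 : 4 * (C₁ ^ 2 + C₂ ^ 2 / (2 * C₃)) * 1
          ≤ 4 * (C₁ ^ 2 + C₂ ^ 2 / (2 * C₃)) * Real.exp Y :=
        mul_le_mul_of_nonneg_left (Real.one_le_exp hYnn) hS4.le
      have := pow_pos hC₁ 2
      linarith
    exact lt_of_pow_lt_pow_left₀ 2 hMpos.le h1
  have habscont : ContinuousOn (fun t => ‖w t‖) (Set.Icc tstar t₀) :=
    continuous_norm.comp_continuousOn hwcont
  have hboot : ∀ s ∈ Set.Icc tstar t₀, ‖w s‖ ≤ M * ε ^ (1 + δ) := by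
    by_contra hcon
    push_neg at hcon
    obtain ⟨s₀, hs₀, hs₀'⟩ := hcon
    set B := Set.Icc tstar t₀ ∩
      (fun t => ‖w t‖) ⁻¹' Set.Ici (M * ε ^ (1 + δ)) with hBdef
    have hBclosed : IsClosed B :=
      habscont.preimage_isClosed_of_isClosed isClosed_Icc isClosed_Ici
    have hBne : B.Nonempty := ⟨s₀, hs₀, le_of_lt hs₀'⟩
    have hBbdd : BddBelow B := ⟨tstar, fun x hx => hx.1.1⟩
    set m := sInf B with hmdef
    have hmB : m ∈ B := hBclosed.csInf_mem hBne hBbdd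
    have hm1 : tstar ≤ m := hmB.1.1
    have hmt₀ : m ≤ t₀ := hmB.1.2
    have hmge : M * ε ^ (1 + δ) ≤ ‖w m‖ := hmB.2
    have hwts : ‖w tstar‖ < M * ε ^ (1 + δ) := by
      rw [hwtstar]
      exact lt_of_le_of_lt (hψ₁ ξ) (mul_lt_mul_of_pos_right hC₁M hεδpos)
    have hmst : tstar < m := by
      rcases eq_or_lt_of_le hm1 with h | h
      · exfalso
        rw [← h] at hmge
        linarith
      · exact h
    have hlt : ∀ s ∈ Set.Ico tstar m, ‖w s‖ < M * ε ^ (1 + δ) := by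
      intro s hs
      by_contra hge
      push_neg at hge
      have hsB : s ∈ B := ⟨⟨hs.1, le_trans hs.2.le hmt₀⟩, hge⟩
      have hle2 := csInf_le hBbdd hsB
      rw [← hmdef] at hle2
      linarith [hs.2]
    have hbound_m : ∀ s ∈ Set.Icc tstar m, ‖w s‖ ≤ M * ε ^ (1 + δ) := by
      intro s hs
      rcases eq_or_lt_of_le hs.2 with h | h
      · have hcm : ContinuousWithinAt (fun t => ‖w t‖) (Set.Ico tstar m) m :=
          (habscont m ⟨hm1, hmt₀⟩).mono
            (fun x hx => ⟨hx.1, le_trans hx.2.le hmt₀⟩)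
        have hmem : m ∈ closure (Set.Ico tstar m) := by
          rw [closure_Ico hmst.ne]
          exact ⟨hm1, le_refl m⟩
        have hnb : (nhdsWithin m (Set.Ico tstar m)).NeBot :=
          mem_closure_iff_nhdsWithin_neBot.1 hmem
        have hlim : ‖w m‖ ≤ M * ε ^ (1 + δ) :=
          le_of_tendsto hcm (Filter.eventually_of_mem self_mem_nhdsWithin
            (fun x hx => (hlt x hx).le))
        rw [h]
        exact hlim
      · exact (hlt s ⟨hs.1, h⟩).le
    have hfinal := step m ⟨hm1, hmt₀⟩ hbound_m
    have hltm : ‖w m‖ < M * ε ^ (1 + δ) :=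
      lt_of_le_of_lt hfinal (mul_lt_mul_of_pos_right hMpM hεδpos)
    linarith
  have hwle : ‖w t₀‖ ≤ M * ε ^ (1 + δ) :=
    le_trans (step t₀ ⟨ht₀l, le_refl t₀⟩ hboot)
      (mul_le_mul_of_nonneg_right hMpM.le hεδpos.le)
  constructor
  · have hsplit : η t₀ ξ = e0 t₀ + w t₀ := by rw [hwdef]; ring
    have habs_split : ‖η t₀ ξ‖ ≤ ‖e0 t₀‖ + ‖w t₀‖ := by
      rw [hsplit]
      exact norm_add_le _ _
    exact le_trans habs_split
      (add_le_add (habs_e0_le t₀ ht₀l (le_refl t₀)) hwle)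
  · have h1 : (C₀ + 1) * ε = C₀ * ε + ε := by ring
    linarith [hMe]
end
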